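/- Let a, b ∈ ℂ and let Ψ be the 7×7 complex matrix whose only nonzero entries are Ψ(1,2) = conj(b), Ψ(2,1) = b, Ψ(2,3) = conj(a), Ψ(3,2) = a, Ψ(3,4) = √2·i·conj(b), Ψ(4,3) = −√2·i·b, Ψ(4,5) = √2·i·conj(b), Ψ(5,4) = −√2·i·b, Ψ(5,6) = conj(a), Ψ(6,5) = a, Ψ(6,7) = conj(b), Ψ(7,6) = b. Then the characteristic polynomial of Ψ equals X⁷ − A·X⁵ + (A²/4)·X³ − C·X, where A = 2(|a|² + 3|b|²) and C = 4|b|⁴(|a|² + |b|²). In particular, if (a,b) ≠ (0,0) then 54C/A³ = 27(|a|²|b|⁴ + |b|⁶)/(|a|² + 3|b|²)³, and this quantity equals 1 if and only if a = 0. -/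

import Mathlib

/-!
`Ψ` is tridiagonal with zero diagonal, so expanding its characteristic determinant along the first
row gives the three-term recurrence `p₇ = X p₆ - u₀l₀ p₅`, in which only the products `uᵢlᵢ` of
opposite off-diagonal entries occur; for `Ψ` these are `|b|², |a|², 2|b|², 2|b|², |a|², |b|²`.
For the invariant, `(|a|² + 3|b|²)³ - 27|b|⁴(|a|² + |b|²) = |a|⁴(|a|² + 9|b|²)`, which vanishes
exactly when `a = 0` as long as `|a|² + 3|b|² ≠ 0`.
-/

noncomputable section

/-- The matrix `Ψ` associated to `a, b ∈ ℂ` (the pencil of a cyclic `G₂'`-Higgs bundle in a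
unitary cross-product basis). -/
def PsiMat (a b : ℂ) : Matrix (Fin 7) (Fin 7) ℂ :=
  !![0, starRingEnd ℂ b, 0, 0, 0, 0, 0;
     b, 0, starRingEnd ℂ a, 0, 0, 0, 0;
     0, a, 0, (Real.sqrt 2 : ℂ) * Complex.I * starRingEnd ℂ b, 0, 0, 0;
     0, 0, -((Real.sqrt 2 : ℂ) * Complex.I * b), 0,
       (Real.sqrt 2 : ℂ) * Complex.I * starRingEnd ℂ b, 0, 0;
     0, 0, 0, -((Real.sqrt 2 : ℂ) * Complex.I * b), 0, starRingEnd ℂ a, 0;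
     0, 0, 0, 0, a, 0, starRingEnd ℂ b;
     0, 0, 0, 0, 0, b, 0]

namespace Matrix

open Polynomial

variable {R : Type*} [CommRing R]

/-- `u i` sits at `(i, i + 1)` and `l j` at `(j + 1, j)`; the last entries of `u` and `l` are never
used. -/
def tridiagonal {n : ℕ} (d u l : Fin n → R) : Matrix (Fin n) (Fin n) R :=
  of fun i j =>
    if i = j then d i else if (j : ℕ) = i + 1 then u i else if (i : ℕ) = j + 1 then l j else 0

theorem tridiagonal_submatrix_succ {n : ℕ} (d u l : Fin (n + 1) → R) :
    (tridiagonal d u l).submatrix Fin.succ Fin.succ =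
      tridiagonal (Fin.tail d) (Fin.tail u) (Fin.tail l) := by
  ext i j
  simp [tridiagonal, Fin.tail, Fin.ext_iff]

theorem det_tridiagonal_succ_succ {n : ℕ} (d u l : Fin (n + 2) → R) :
    (tridiagonal d u l).det =
      d 0 * (tridiagonal (Fin.tail d) (Fin.tail u) (Fin.tail l)).det
        - u 0 * l 0 *
          (tridiagonal (Fin.tail (Fin.tail d)) (Fin.tail (Fin.tail u))
            (Fin.tail (Fin.tail l))).det := by
  rw [det_succ_row_zero, Fin.sum_univ_succ, Fin.sum_univ_succ,
    Finset.sum_eq_zero fun j _ => by simp [tridiagonal, Fin.ext_iff]]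
  have hminor : ((tridiagonal d u l).submatrix Fin.succ (Fin.succ 0).succAbove).det =
      l 0 * (tridiagonal (Fin.tail (Fin.tail d)) (Fin.tail (Fin.tail u))
            (Fin.tail (Fin.tail l))).det := by
    rw [det_succ_column_zero, Fin.sum_univ_succ,
      Finset.sum_eq_zero fun i _ => by simp [tridiagonal, Fin.ext_iff, Fin.succAbove]]
    have hsub : (((tridiagonal d u l).submatrix Fin.succ (Fin.succ 0).succAbove).submatrix
        (Fin.succAbove 0) Fin.succ) =
        tridiagonal (Fin.tail (Fin.tail d)) (Fin.tail (Fin.tail u)) (Fin.tail (Fin.tail l)) := by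
      ext i j
      simp [tridiagonal, Fin.tail, Fin.ext_iff, Fin.succAbove]
    rw [hsub]
    simp [tridiagonal]
  rw [hminor, Fin.succAbove_zero, tridiagonal_submatrix_succ]
  simp only [Fin.coe_ofNat_eq_mod, Nat.zero_mod, pow_zero, tridiagonal, of_apply, ↓reduceIte,
    one_mul, Fin.succ_zero_eq_one, Nat.one_mod, pow_one, zero_ne_one, zero_add, neg_mul, add_zero]
  ring

theorem charmatrix_tridiagonal {n : ℕ} (d u l : Fin n → R) :
    charmatrix (tridiagonal d u l) =
      tridiagonal (fun i => X - C (d i)) (fun i => -C (u i)) (fun i => -C (l i)) := by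
  ext i j
  by_cases h : i = j
  · subst h; simp [charmatrix_apply_eq, tridiagonal]
  · rw [charmatrix_apply_ne _ _ _ h]
    simp only [tridiagonal, of_apply, if_neg h]
    split_ifs <;> simp

theorem charpoly_tridiagonal_succ_succ {n : ℕ} (d u l : Fin (n + 2) → R) :
    (tridiagonal d u l).charpoly =
      (X - C (d 0)) * (tridiagonal (Fin.tail d) (Fin.tail u) (Fin.tail l)).charpoly
        - C (u 0 * l 0) *
          (tridiagonal (Fin.tail (Fin.tail d)) (Fin.tail (Fin.tail u))
            (Fin.tail (Fin.tail l))).charpoly := by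
  simp only [charpoly, charmatrix_tridiagonal, det_tridiagonal_succ_succ, neg_mul_neg, map_mul]
  rfl

theorem charpoly_tridiagonal_one (d u l : Fin 1 → R) :
    (tridiagonal d u l).charpoly = X - C (d 0) := by
  simp [charpoly, det_unique, tridiagonal]

end Matrix

open Matrix Polynomial ComplexConjugate

theorem PsiMat_eq_tridiagonal (a b : ℂ) :
    PsiMat a b = tridiagonal ![0, 0, 0, 0, 0, 0, 0]
      ![conj b, conj a, √2 * Complex.I * conj b, √2 * Complex.I * conj b, conj a, conj b, 0]
      ![b, a, -(√2 * Complex.I * b), -(√2 * Complex.I * b), a, b, 0] := by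
  ext i j
  fin_cases i <;> fin_cases j <;> simp [PsiMat, tridiagonal]

theorem sqrt_two_I_mul_conj_mul_neg (b : ℂ) :
    √2 * Complex.I * conj b * -(√2 * Complex.I * b) = 2 * ‖b‖ ^ 2 := by
  have h2 : (√2 : ℂ) ^ 2 = 2 := by exact_mod_cast Real.sq_sqrt zero_le_two
  linear_combination (-(conj b * b) * Complex.I ^ 2) * h2 - 2 * conj b * b * Complex.I_sq
    + 2 * Complex.conj_mul' b

theorem charpoly_PsiMat (a b : ℂ) :
    (PsiMat a b).charpoly =
      Polynomial.X ^ 7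
        - Polynomial.C ((2 * (‖a‖ ^ 2 + 3 * ‖b‖ ^ 2) : ℝ) : ℂ)
            * Polynomial.X ^ 5
        + Polynomial.C (((2 * (‖a‖ ^ 2 + 3 * ‖b‖ ^ 2)) ^ 2 / 4 : ℝ) : ℂ)
            * Polynomial.X ^ 3
        - Polynomial.C ((4 * ‖b‖ ^ 4 * (‖a‖ ^ 2 + ‖b‖ ^ 2) : ℝ) : ℂ)
            * Polynomial.X := by
  -- `map_div₀` does not apply in `ℂ[X]`, so the `/ 4` is cleared before distributing `C`.
  have hquarter : ((2 * (‖a‖ ^ 2 + 3 * ‖b‖ ^ 2)) ^ 2 / 4 : ℝ) = (‖a‖ ^ 2 + 3 * ‖b‖ ^ 2) ^ 2 := by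
    ring
  rw [hquarter, PsiMat_eq_tridiagonal]
  simp only [charpoly_tridiagonal_succ_succ, Fin.tail_vecCons, cons_val_zero, charpoly_isEmpty]
  rw [charpoly_tridiagonal_one]
  simp only [cons_val_zero, map_zero, sub_zero, Complex.conj_mul', sqrt_two_I_mul_conj_mul_neg]
  push_cast
  simp only [map_add, map_mul, map_pow, map_ofNat]
  ring

theorem invariant_eq (x y : ℝ) :
    54 * (4 * y ^ 4 * (x ^ 2 + y ^ 2)) / (2 * (x ^ 2 + 3 * y ^ 2)) ^ 3
      = 27 * (x ^ 2 * y ^ 4 + y ^ 6) / (x ^ 2 + 3 * y ^ 2) ^ 3 := by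
  rw [← mul_div_mul_left (27 * (x ^ 2 * y ^ 4 + y ^ 6)) _ (by norm_num : (8 : ℝ) ≠ 0)]
  congr 1 <;> ring

theorem invariant_eq_one_iff (x y : ℝ) (h : x ^ 2 + 3 * y ^ 2 ≠ 0) :
    27 * (x ^ 2 * y ^ 4 + y ^ 6) / (x ^ 2 + 3 * y ^ 2) ^ 3 = 1 ↔ x = 0 := by
  rw [div_eq_one_iff_eq (pow_ne_zero 3 h)]
  constructor
  · intro heq
    have hfactor : x ^ 4 * (x ^ 2 + 9 * y ^ 2) = 0 := by linear_combination -heq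
    rcases mul_eq_zero.1 hfactor with hx | hxy
    · exact pow_eq_zero_iff (by norm_num) |>.1 hx
    · nlinarith [sq_nonneg x, sq_nonneg y]
  · rintro rfl
    ring

theorem norm_sq_add_three_mul_norm_sq_ne_zero {a b : ℂ} (hab : (a, b) ≠ (0, 0)) :
    ‖a‖ ^ 2 + 3 * ‖b‖ ^ 2 ≠ 0 := by
  obtain ha | hb : a ≠ 0 ∨ b ≠ 0 := by
    rw [← not_and_or]
    rintro ⟨rfl, rfl⟩
    exact hab rfl
  · have := norm_pos_iff.2 ha
    positivity
  · have := norm_pos_iff.2 hb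
    positivity

/-- The characteristic polynomial of `Ψ` is
`X⁷ − A X⁵ + (A²/4) X³ − C X` with `A = 2(|a|² + 3|b|²)` and `C = 4|b|⁴(|a|² + |b|²)`;
for `(a,b) ≠ (0,0)` the invariant `54C/A³` equals `27(|a|²|b|⁴ + |b|⁶)/(|a|² + 3|b|²)³`,
and it equals `1` iff `a = 0`. -/
theorem charpoly_invariant (a b : ℂ) :
    (PsiMat a b).charpoly =
      Polynomial.X ^ 7
        - Polynomial.C ((2 * (‖a‖ ^ 2 + 3 * ‖b‖ ^ 2) : ℝ) : ℂ)
            * Polynomial.X ^ 5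
        + Polynomial.C (((2 * (‖a‖ ^ 2 + 3 * ‖b‖ ^ 2)) ^ 2 / 4 : ℝ) : ℂ)
            * Polynomial.X ^ 3
        - Polynomial.C ((4 * ‖b‖ ^ 4 * (‖a‖ ^ 2 + ‖b‖ ^ 2) : ℝ) : ℂ)
            * Polynomial.X ∧
    ((a, b) ≠ (0, 0) →
      54 * (4 * ‖b‖ ^ 4 * (‖a‖ ^ 2 + ‖b‖ ^ 2))
          / (2 * (‖a‖ ^ 2 + 3 * ‖b‖ ^ 2)) ^ 3
        = 27 * (‖a‖ ^ 2 * ‖b‖ ^ 4 + ‖b‖ ^ 6)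
          / (‖a‖ ^ 2 + 3 * ‖b‖ ^ 2) ^ 3 ∧
      (54 * (4 * ‖b‖ ^ 4 * (‖a‖ ^ 2 + ‖b‖ ^ 2))
          / (2 * (‖a‖ ^ 2 + 3 * ‖b‖ ^ 2)) ^ 3 = 1 ↔ a = 0)) := by
  refine ⟨charpoly_PsiMat a b, fun hab => ⟨invariant_eq _ _, ?_⟩⟩
  rw [invariant_eq, invariant_eq_one_iff _ _ (norm_sq_add_three_mul_norm_sq_ne_zero hab),
    norm_eq_zero]
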